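/- arXiv:1210.3721 — 3 statements merged into one kernel-verified Lean document; each statement's English description precedes it below -/
import Mathlib

section
/- Let a, e > 0, b ∈ ℝ, and let φ(τ,ξ) be holomorphic in τ near 0 with |φ(τ,ξ)| ≤ C₁(|τ|³ + ξ²) for (τ,ξ) near (0,0). Then for ξ > 0 sufficiently small, the equation aτ² + bξτ + eξ = φ(τ,ξ) has exactly one solution τ in the ball of radius Aξ centered at the root τ₊ = i√((e/a)ξ) + O(ξ) of g(τ) = aτ² + bξτ + eξ, provided A is chosen large enough; this solution has imaginary part of order √ξ and real part of order ξ. -/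
/-!
With `s = √((e/a) ξ)` and `c = i s` one has `a c² = -e ξ`, so the equation reads
`(τ - c)(τ + c) = g(τ)` with `g(τ) = (φ(τ, ξ) - b ξ τ) / a`: its solutions are the fixed points of
`F(τ) = c + g(τ) / (τ + c)`. On the ball of radius `2s` about `c`, `|g| ≤ N = O(ξ^{3/2})`, so by
the Cauchy estimate `g` is `2N/s`-Lipschitz on the ball of radius `s/2`. As `|τ + c| ≥ s` there,
`F` moves `c` by at most `N/s = O(ξ)` and is `3N/s² = O(√ξ)`-Lipschitz; for small `ξ` it is
therefore a contraction of the ball of radius `A ξ`. This takes the place of Rouché's theorem.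
-/

open Metric Complex Set Filter Function Topology NNReal

theorem existsUnique_isFixedPt_of_lipschitzOnWith_ball {α : Type*} [MetricSpace α]
    [CompleteSpace α] {F : α → α} {c : α} {K : ℝ≥0} {ρ δ : ℝ} (hK : K < 1) (hδ : 0 ≤ δ)
    (hδρ : δ < ρ) (hFc : ∀ x ∈ ball c ρ, dist (F x) c ≤ δ) (hF : LipschitzOnWith K F (ball c ρ)) :
    ∃! x, x ∈ ball c ρ ∧ IsFixedPt F x := by
  have hsub : closedBall c δ ⊆ ball c ρ := closedBall_subset_ball hδρ
  have hmaps : MapsTo F (closedBall c δ) (closedBall c δ) := fun x hx => hFc x (hsub hx)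
  obtain ⟨x, hx, hfix, -⟩ := ContractingWith.exists_fixedPoint' isClosed_closedBall.isComplete
    hmaps ⟨hK, (hF.mono hsub).mapsToRestrict hmaps⟩ (mem_closedBall_self hδ) (edist_ne_top _ _)
  refine ⟨x, ⟨hsub hx, hfix⟩, fun y ⟨hy, hyfix⟩ => ?_⟩
  have hyx := hF.dist_le_mul y hy x (hsub hx)
  rw [hyfix.eq, hfix.eq] at hyx
  have hK' : (K : ℝ) < 1 := hK
  exact dist_le_zero.mp (by nlinarith [dist_nonneg (x := y) (y := x)])

theorem norm_sub_le_of_forall_norm_le_on_ball {E F : Type*} [NormedAddCommGroup E]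
    [NormedSpace ℂ E] [NormedAddCommGroup F] [NormedSpace ℂ F] {f : E → F} {z w : E} {R M : ℝ}
    (hf : DifferentiableOn ℂ f (ball z R)) (hM : ∀ y ∈ ball z R, ‖f y‖ ≤ M) (hw : w ∈ ball z R) :
    ‖f w - f z‖ ≤ 2 * M / R * ‖w - z‖ := by
  have hmaps : MapsTo f (ball z R) (closedBall (f z) (2 * M)) := fun y hy => by
    rw [mem_closedBall, dist_eq_norm]
    linarith [norm_sub_le (f y) (f z), hM y hy, hM z (mem_ball_self (pos_of_mem_ball hw))]
  simpa only [dist_eq_norm] using Complex.dist_le_div_mul_dist_of_mapsTo_ball hf hmaps hw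

theorem norm_sub_le_of_mem_ball_of_forall_norm_le {E F : Type*} [NormedAddCommGroup E]
    [NormedSpace ℂ E] [NormedAddCommGroup F] [NormedSpace ℂ F] {f : E → F} {c τ σ : E} {R M : ℝ}
    (hf : DifferentiableOn ℂ f (ball c (2 * R))) (hM : ∀ y ∈ ball c (2 * R), ‖f y‖ ≤ M)
    (hτ : τ ∈ ball c (R / 2)) (hσ : σ ∈ ball c (R / 2)) :
    ‖f τ - f σ‖ ≤ 2 * M / R * ‖τ - σ‖ := by
  rw [mem_ball] at hτ hσ
  have hR : 0 ≤ R := by linarith [dist_nonneg (x := τ) (y := c)]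
  have hσR : ball σ R ⊆ ball c (2 * R) := ball_subset_ball' (by linarith)
  refine norm_sub_le_of_forall_norm_le_on_ball (hf.mono hσR) (fun y hy => hM y (hσR hy)) ?_
  rw [mem_ball]
  linarith [dist_triangle_right τ σ c]

theorem le_norm_add_of_mem_ball {c τ : ℂ} {ρ : ℝ} (hρ : ρ ≤ ‖c‖) (hτ : τ ∈ ball c ρ) :
    ‖c‖ ≤ ‖τ + c‖ := by
  rw [mem_ball, dist_eq_norm] at hτ
  have h2c : ‖(2 : ℂ) * c‖ = 2 * ‖c‖ := by rw [norm_mul, Complex.norm_two]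
  calc ‖c‖ ≤ ‖(2 : ℂ) * c‖ - ‖-(τ - c)‖ := by rw [h2c, norm_neg]; linarith
    _ ≤ ‖(2 : ℂ) * c - -(τ - c)‖ := norm_sub_norm_le _ _
    _ = ‖τ + c‖ := by ring_nf

theorem norm_div_sub_div_le {𝕜 : Type*} [NormedField 𝕜] {u v p q : 𝕜} {s L N : ℝ} (hs : 0 < s)
    (huv : ‖u - v‖ ≤ L * ‖p - q‖) (hv : ‖v‖ ≤ N) (hp : s ≤ ‖p‖) (hq : s ≤ ‖q‖) :
    ‖u / p - v / q‖ ≤ (L / s + N / s ^ 2) * ‖p - q‖ := by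
  have hp0 : p ≠ 0 := norm_pos_iff.mp (hs.trans_le hp)
  have hq0 : q ≠ 0 := norm_pos_iff.mp (hs.trans_le hq)
  have hid : u / p - v / q = (u - v) / p - v * (p - q) / (p * q) := by field_simp; ring
  rw [hid]
  calc _ ≤ ‖(u - v) / p‖ + ‖v * (p - q) / (p * q)‖ := norm_sub_le _ _
    _ ≤ L * ‖p - q‖ / s + N * ‖p - q‖ / (s * s) := by
      rw [norm_div, norm_div, norm_mul, norm_mul]
      gcongr
      · exact (norm_nonneg _).trans huv
      · exact mul_nonneg ((norm_nonneg _).trans hv) (norm_nonneg _)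
    _ = (L / s + N / s ^ 2) * ‖p - q‖ := by ring

theorem existsUnique_sub_mul_add_eq {g : ℂ → ℂ} {c : ℂ} {ρ N : ℝ}
    (hg : DifferentiableOn ℂ g (ball c (2 * ‖c‖))) (hgN : ∀ w ∈ ball c (2 * ‖c‖), ‖g w‖ ≤ N)
    (hρ : ρ ≤ ‖c‖ / 2) (hNρ : N / ‖c‖ < ρ) (hN : 3 * N < ‖c‖ ^ 2) :
    ∃! τ, τ ∈ ball c ρ ∧ (τ - c) * (τ + c) = g τ := by
  set s := ‖c‖
  have hs : 0 < s := by
    by_contra! h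
    rw [le_antisymm h (norm_nonneg c), div_zero] at hNρ
    linarith
  have hN0 : 0 ≤ N := (norm_nonneg _).trans (hgN c (mem_ball_self (by positivity)))
  have hρs : ball c ρ ⊆ ball c (2 * s) := ball_subset_ball (by linarith)
  have hadd : ∀ τ ∈ ball c ρ, s ≤ ‖τ + c‖ := fun τ => le_norm_add_of_mem_ball (by linarith)
  set F : ℂ → ℂ := fun τ => c + g τ / (τ + c) with hF
  have hfix : ∀ τ ∈ ball c ρ, IsFixedPt F τ ↔ (τ - c) * (τ + c) = g τ := fun τ hτ => by
    have hτc : τ + c ≠ 0 := norm_pos_iff.mp (hs.trans_le (hadd τ hτ))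
    rw [IsFixedPt, hF, ← eq_sub_iff_add_eq', div_eq_iff hτc, eq_comm]
  have hFc : ∀ τ ∈ ball c ρ, dist (F τ) c ≤ N / s := fun τ hτ => by
    rw [dist_eq_norm, hF, add_sub_cancel_left, norm_div]
    exact div_le_div₀ hN0 (hgN τ (hρs hτ)) hs (hadd τ hτ)
  have hLip : LipschitzOnWith (3 * N / s ^ 2).toNNReal F (ball c ρ) := by
    refine LipschitzOnWith.of_dist_le_mul fun τ hτ σ hσ => ?_
    have hgL := norm_sub_le_of_mem_ball_of_forall_norm_le hg hgN (ball_subset_ball hρ hτ)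
      (ball_subset_ball hρ hσ)
    rw [← add_sub_add_right_eq_sub τ σ c] at hgL
    rw [Real.coe_toNNReal _ (by positivity), dist_eq_norm, dist_eq_norm, hF,
      add_sub_add_left_eq_sub, ← add_sub_add_right_eq_sub τ σ c]
    refine (norm_div_sub_div_le hs hgL (hgN σ (hρs hσ)) (hadd τ hτ) (hadd σ hσ)).trans_eq ?_
    field_simp
    ring
  have hK : (3 * N / s ^ 2).toNNReal < 1 := by
    rwa [Real.toNNReal_lt_one, div_lt_one (by positivity)]
  refine (existsUnique_congr fun τ => ?_).mp
    (existsUnique_isFixedPt_of_lipschitzOnWith_ball hK (by positivity) hNρ hFc hLip)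
  exact and_congr_right (hfix τ)

theorem existsUnique_quadratic_eq_near_root {f : ℂ → ℂ} {a b e ξ s ρ M : ℝ} (ha : 0 < a)
    (hs : 0 < s) (hroot : a * s ^ 2 = e * ξ) (hρ : ρ ≤ s / 2)
    (hf : DifferentiableOn ℂ f (ball 0 (3 * s))) (hfM : ∀ w ∈ ball (0 : ℂ) (3 * s), ‖f w‖ ≤ M)
    (hMρ : (M + 3 * |b| * |ξ| * s) / (a * s) < ρ) (hM : 3 * (M + 3 * |b| * |ξ| * s) < a * s ^ 2) :
    ∃! τ : ℂ, τ ∈ ball (I * s) ρ ∧ (a : ℂ) * τ ^ 2 + b * ξ * τ + e * ξ = f τ := by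
  set c : ℂ := I * s with hc_def
  have hc : ‖c‖ = s := by simp [hc_def, abs_of_pos hs]
  have hsub : ball c (2 * ‖c‖) ⊆ ball 0 (3 * s) :=
    ball_subset_ball' (by rw [dist_zero_right, hc]; linarith)
  set g : ℂ → ℂ := fun τ => (f τ - b * ξ * τ) / a with hg_def
  have hg : DifferentiableOn ℂ g (ball c (2 * ‖c‖)) :=
    ((hf.mono hsub).sub (by fun_prop)).div_const _
  have hgN : ∀ w ∈ ball c (2 * ‖c‖), ‖g w‖ ≤ (M + 3 * |b| * |ξ| * s) / a := by
    intro w hw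
    have hw3 : ‖w‖ ≤ 3 * s := by
      simpa only [mem_ball, dist_zero_right] using (mem_ball.mp (hsub hw)).le
    have hbw : ‖(b : ℂ) * ξ * w‖ ≤ |b| * |ξ| * (3 * s) := by
      rw [norm_mul, norm_mul, norm_real, norm_real, Real.norm_eq_abs, Real.norm_eq_abs]
      gcongr
    rw [hg_def, norm_div, norm_real, Real.norm_of_nonneg ha.le]
    gcongr
    linarith [norm_sub_le (f w) (b * ξ * w), hfM w (hsub hw)]
  have heq : ∀ τ : ℂ, (a : ℂ) * τ ^ 2 + b * ξ * τ + e * ξ = f τ ↔ (τ - c) * (τ + c) = g τ := by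
    intro τ
    have hroot' : (a : ℂ) * s ^ 2 = e * ξ := by exact_mod_cast hroot
    rw [hg_def, eq_div_iff (by exact_mod_cast ha.ne')]
    constructor <;> intro h
    · linear_combination h - (a * s ^ 2 : ℂ) * I_sq + hroot'
    · linear_combination h + (a * s ^ 2 : ℂ) * I_sq - hroot'
  simp only [heq]
  refine existsUnique_sub_mul_add_eq hg hgN (by rwa [hc]) (by rwa [hc, div_div]) ?_
  rw [hc, mul_div_assoc', div_lt_iff₀ ha]
  linarith

theorem existsUnique_quadratic_eq_near_root_of_sqrt_small {f : ℂ → ℂ} {a b e r C m P A ξ : ℝ}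
    (ha : 0 < a) (hm : 0 < m) (hme : a * m ^ 2 = e) (hC : 0 ≤ C)
    (hP : C * (27 * m ^ 3 + 1) + 3 * |b| * m ≤ P) (hA : P / (a * m) < A) (hξ : 0 < ξ)
    (ht1 : √ξ ≤ 1) (htr : 3 * m * √ξ < r) (htA : A * √ξ ≤ m / 2) (htP : 3 * P * √ξ < a * m ^ 2)
    (hf : DifferentiableOn ℂ f (ball 0 r))
    (hfC : ∀ w ∈ ball (0 : ℂ) r, ‖f w‖ ≤ C * (‖w‖ ^ 3 + ξ ^ 2)) :
    ∃! τ : ℂ, τ ∈ ball (I * ((m * √ξ : ℝ) : ℂ)) (A * ξ) ∧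
      (a : ℂ) * τ ^ 2 + b * ξ * τ + e * ξ = f τ := by
  set t := √ξ
  have ht : 0 < t := Real.sqrt_pos.mpr hξ
  have hξt : ξ = t ^ 2 := (Real.sq_sqrt hξ.le).symm
  set s := m * t with hs
  have hMP : C * (27 * s ^ 3 + ξ ^ 2) + 3 * |b| * |ξ| * s ≤ P * t ^ 3 := by
    have ht43 : C * t ^ 4 ≤ C * t ^ 3 :=
      mul_le_mul_of_nonneg_left (pow_le_pow_of_le_one ht.le ht1 (by norm_num)) hC
    have hPt := mul_le_mul_of_nonneg_right hP (pow_nonneg ht.le 3)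
    rw [abs_of_pos hξ, hξt]
    linear_combination ht43 + hPt
  refine existsUnique_quadratic_eq_near_root (M := C * (27 * s ^ 3 + ξ ^ 2)) ha (by positivity)
    (by rw [hs, hξt, ← hme]; ring) (by rw [hξt]; nlinarith)
    (hf.mono (ball_subset_ball (by linarith))) (fun w hw => ?_) ?_ ?_
  · have hw3 : ‖w‖ ≤ 3 * s := by simpa only [mem_ball, dist_zero_right] using (mem_ball.mp hw).le
    calc ‖f w‖ ≤ C * (‖w‖ ^ 3 + ξ ^ 2) := hfC w (ball_subset_ball (by linarith) hw)
      _ ≤ C * (27 * s ^ 3 + ξ ^ 2) := by gcongr; linarith [pow_le_pow_left₀ (norm_nonneg w) hw3 3]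
  · calc _ ≤ P * t ^ 3 / (a * s) := by gcongr
      _ = P / (a * m) * ξ := by rw [hξt, hs]; field_simp
      _ < A * ξ := by gcongr
  · calc _ ≤ 3 * P * t * t ^ 2 := by linarith
      _ < a * m ^ 2 * t ^ 2 := by gcongr
      _ = a * s ^ 2 := by ring

theorem eventually_existsUnique_quadratic_eq_near_root {a e b r C : ℝ} {φ : ℂ → ℝ → ℂ}
    (ha : 0 < a) (he : 0 < e) (hr : 0 < r) (hC : 0 ≤ C)
    (hφ : ∀ ξ ∈ Ioo (0 : ℝ) r, DifferentiableOn ℂ (fun τ => φ τ ξ) (ball 0 r))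
    (hbound : ∀ τ ∈ ball (0 : ℂ) r, ∀ ξ ∈ Ioo (0 : ℝ) r, ‖φ τ ξ‖ ≤ C * (‖τ‖ ^ 3 + ξ ^ 2)) :
    ∃ A > 0, ∀ᶠ ξ in 𝓝[>] (0 : ℝ), ∃! τ : ℂ, τ ∈ ball (I * (√(e / a * ξ) : ℂ)) (A * ξ) ∧
      (a : ℂ) * τ ^ 2 + b * ξ * τ + e * ξ = φ τ ξ := by
  set m := √(e / a)
  have hm : 0 < m := Real.sqrt_pos.mpr (div_pos he ha)
  have hme : a * m ^ 2 = e := by rw [Real.sq_sqrt (div_pos he ha).le]; field_simp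
  set P := C * (27 * m ^ 3 + 1) + 3 * |b| * m
  set A := P / (a * m) + 1
  refine ⟨A, by positivity, ?_⟩
  have hsqrt : Tendsto (fun ξ : ℝ => √ξ) (𝓝[>] 0) (𝓝 0) := by
    simpa using (Real.continuous_sqrt.tendsto 0).mono_left nhdsWithin_le_nhds
  have hsmall : ∀ κ ε : ℝ, 0 < ε → ∀ᶠ ξ in 𝓝[>] (0 : ℝ), κ * √ξ < ε := fun κ ε hε =>
    (mul_zero κ ▸ hsqrt.const_mul κ).eventually (eventually_lt_nhds hε)
  filter_upwards [self_mem_nhdsWithin, nhdsWithin_le_nhds (eventually_lt_nhds hr),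
    hsmall 1 1 one_pos, hsmall (3 * m) r hr, hsmall A (m / 2) (by positivity),
    hsmall (3 * P) (a * m ^ 2) (by positivity)] with ξ (hξ : 0 < ξ) hξr ht1 htr htA htP
  rw [Real.sqrt_mul (div_pos he ha).le ξ]
  exact existsUnique_quadratic_eq_near_root_of_sqrt_small ha hm hme hC le_rfl (lt_add_one _) hξ
    (by linarith) htr htA.le htP (hφ ξ ⟨hξ, hξr⟩) (fun w hw => hbound w hw ξ ⟨hξ, hξr⟩)

theorem abs_re_le_and_abs_im_sub_le_of_mem_ball {τ : ℂ} {s ρ : ℝ} (h : τ ∈ ball (I * s) ρ) :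
    |τ.re| ≤ ρ ∧ |τ.im - s| ≤ ρ := by
  rw [mem_ball, dist_eq_norm] at h
  constructor
  · simpa using (abs_re_le_norm (τ - I * s)).trans h.le
  · simpa using (abs_im_le_norm (τ - I * s)).trans h.le

theorem stmt_9 (a e b : ℝ) (ha : 0 < a) (he : 0 < e)
    (φ : ℂ → ℝ → ℂ) (r C₁ : ℝ) (hr : 0 < r) (hC₁ : 0 < C₁)
    (hhol : ∀ ξ ∈ Set.Ioo (0:ℝ) r, AnalyticOn ℂ (fun τ => φ τ ξ) (Metric.ball 0 r))
    (hbound : ∀ τ ∈ Metric.ball (0:ℂ) r, ∀ ξ ∈ Set.Ioo (0:ℝ) r,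
      ‖φ τ ξ‖ ≤ C₁ * (‖τ‖^3 + ξ^2)) :
    ∃ A > 0, ∃ K > 0, ∃ ξ₀ > 0, ∀ ξ : ℝ, 0 < ξ → ξ < ξ₀ →
      (∃! τ : ℂ, τ ∈ Metric.ball (Complex.I * (Real.sqrt (e/a * ξ) : ℂ)) (A*ξ) ∧
        (a : ℂ)*τ^2 + (b : ℂ)*(ξ : ℂ)*τ + (e : ℂ)*(ξ : ℂ) = φ τ ξ) ∧
      (∀ τ : ℂ, τ ∈ Metric.ball (Complex.I * (Real.sqrt (e/a * ξ) : ℂ)) (A*ξ) →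
        (a : ℂ)*τ^2 + (b : ℂ)*(ξ : ℂ)*τ + (e : ℂ)*(ξ : ℂ) = φ τ ξ →
        |τ.re| ≤ K * ξ ∧ |τ.im - Real.sqrt (e/a * ξ)| ≤ K * ξ) := by
  obtain ⟨A, hA, hev⟩ := eventually_existsUnique_quadratic_eq_near_root (b := b) ha he hr hC₁.le
    (fun ξ hξ => (hhol ξ hξ).differentiableOn) hbound
  obtain ⟨ξ₀, hξ₀, hsub⟩ := mem_nhdsGT_iff_exists_Ioo_subset.mp hev
  exact ⟨A, hA, A, hA, ξ₀, hξ₀, fun ξ hξ hξξ₀ =>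
    ⟨hsub ⟨hξ, hξξ₀⟩, fun τ hτ _ => abs_re_le_and_abs_im_sub_le_of_mem_ball hτ⟩⟩
end

section
/- Let d > 0 and f : ℝ → ℝ be C¹ with f(0) = f(1) = 0, 0 < f(s) ≤ f'(0)s for s ∈ (0,1), and f(s) < 0 for s > 1. If V : [0,∞) → ℝ is a bounded C² function satisfying −dV'' = f(V) on (0,∞), V'(0) = 0, and inf V > 0, then V ≡ 1. -/
/-!
Where `V ≠ 1` the equation and the sign conditions on `f` give `(V - 1) V'' > 0`, so the flux
`(V - 1) V'` is nondecreasing. It vanishes at `0` by the Neumann condition, and if it ever became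
positive then `(V - 1)²` would grow linearly, contradicting boundedness. So the flux vanishes on
`(0, ∞)`, hence so does its derivative `V'² + (V - 1) V''`, which forces `V = 1`.
-/

open Set Filter Topology

section HalfLine

variable {V : ℝ → ℝ} {a y : ℝ}

theorem hasDerivAt_of_differentiableOn_Ici (hV : DifferentiableOn ℝ V (Ici a)) (hy : a < y) :
    HasDerivAt V (derivWithin V (Ici a) y) y := by
  have hmem : Ici a ∈ 𝓝 y := Ici_mem_nhds hy
  rw [derivWithin_of_mem_nhds hmem]
  exact (hV.differentiableAt hmem).hasDerivAt

theorem hasDerivAt_derivWithin_of_contDiffOn_Ici (hV : ContDiffOn ℝ 2 V (Ici a)) (hy : a < y) :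
    HasDerivAt (derivWithin V (Ici a)) (deriv (deriv V) y) y := by
  have hV' : ContDiffOn ℝ 1 (deriv V) (Ioi a) :=
    (hV.mono Ioi_subset_Ici_self).deriv_of_isOpen isOpen_Ioi (by norm_num)
  have hdiff : DifferentiableAt ℝ (deriv V) y :=
    (hV'.contDiffAt (Ioi_mem_nhds hy)).differentiableAt (by norm_num)
  refine hdiff.hasDerivAt.congr_of_eventuallyEq ?_
  filter_upwards [Ioi_mem_nhds hy] with x hx
  exact derivWithin_of_mem_nhds (Ici_mem_nhds hx)

end HalfLine

theorem exists_lt_of_le_deriv {g g' : ℝ → ℝ} {x₀ k : ℝ} (hk : 0 < k)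
    (hg : ∀ x ≥ x₀, HasDerivAt g (g' x) x) (hkg : ∀ x ≥ x₀, k ≤ g' x) (B : ℝ) :
    ∃ x ≥ x₀, B < g x := by
  have hgrowth := (convex_Ici x₀).mul_sub_le_image_sub_of_le_deriv
    (fun x hx => (hg x hx).continuousAt.continuousWithinAt)
    (fun x hx => (hg x (interior_subset hx)).differentiableAt.differentiableWithinAt)
    (fun x hx => (hg x (interior_subset hx)).deriv ▸ hkg x (interior_subset hx))
  set t := (|B - g x₀| + 1) / k
  have ht : k * t = |B - g x₀| + 1 := mul_div_cancel₀ _ hk.ne'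
  have ht0 : 0 ≤ t := by positivity
  refine ⟨x₀ + t, by linarith, ?_⟩
  have := hgrowth x₀ self_mem_Ici (x₀ + t) (by simp [ht0]) (by linarith)
  rw [add_sub_cancel_left, ht] at this
  linarith [le_abs_self (B - g x₀)]

noncomputable def flux (V : ℝ → ℝ) (a c y : ℝ) : ℝ :=
  (V y - c) * derivWithin V (Ici a) y

section Flux

variable {V : ℝ → ℝ} {a c : ℝ}

theorem hasDerivAt_flux (hV : ContDiffOn ℝ 2 V (Ici a)) {y : ℝ} (hy : a < y) :
    HasDerivAt (flux V a c)
      (derivWithin V (Ici a) y ^ 2 + (V y - c) * deriv (deriv V) y) y := by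
  have hV' := hasDerivAt_of_differentiableOn_Ici (hV.differentiableOn two_ne_zero) hy
  exact ((hV'.sub_const c).mul (hasDerivAt_derivWithin_of_contDiffOn_Ici hV hy)).congr_deriv
    (by ring)

theorem hasDerivAt_sub_sq (hV : ContDiffOn ℝ 2 V (Ici a)) {y : ℝ} (hy : a < y) :
    HasDerivAt (fun x => (V x - c) ^ 2) (2 * flux V a c y) y := by
  have hV' := hasDerivAt_of_differentiableOn_Ici (hV.differentiableOn two_ne_zero) hy
  exact ((hV'.sub_const c).fun_pow 2).congr_deriv (by simp [flux, mul_assoc])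

theorem monotoneOn_flux (hV : ContDiffOn ℝ 2 V (Ici a))
    (hsign : ∀ y > a, 0 ≤ (V y - c) * deriv (deriv V) y) :
    MonotoneOn (flux V a c) (Ici a) := by
  refine monotoneOn_of_deriv_nonneg (convex_Ici a) ?_ ?_ ?_
  · exact ((hV.continuousOn.sub continuousOn_const).mul
      (hV.continuousOn_derivWithin (uniqueDiffOn_Ici a) (by norm_num)))
  · rw [interior_Ici]
    exact fun y hy => (hasDerivAt_flux hV hy).differentiableAt.differentiableWithinAt
  · rw [interior_Ici]
    intro y hy
    rw [(hasDerivAt_flux hV hy).deriv]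
    exact add_nonneg (sq_nonneg _) (hsign y hy)

theorem flux_nonpos_of_bounded (hV : ContDiffOn ℝ 2 V (Ici a))
    (hsign : ∀ y > a, 0 ≤ (V y - c) * deriv (deriv V) y) {M : ℝ} (hM : ∀ y ≥ a, |V y| ≤ M)
    {y : ℝ} (hy : a < y) : flux V a c y ≤ 0 := by
  by_contra! hpos
  have hmono := monotoneOn_flux hV hsign
  obtain ⟨x, hxy, hx⟩ := exists_lt_of_le_deriv (mul_pos two_pos hpos)
    (fun x hx => hasDerivAt_sub_sq hV (hy.trans_le hx))
    (fun x hx => by gcongr; exact hmono hy.le (hy.le.trans hx) hx) ((M + |c|) ^ 2)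
  have hdev : |V x - c| ≤ M + |c| := (abs_sub _ _).trans (by gcongr; exact hM x (hy.le.trans hxy))
  have := pow_le_pow_left₀ (abs_nonneg _) hdev 2
  rw [sq_abs] at this
  linarith

theorem eqOn_const_of_neumann_of_bounded (hV : ContDiffOn ℝ 2 V (Ici a))
    (hneu : derivWithin V (Ici a) a = 0) (hM : ∃ M, ∀ y ≥ a, |V y| ≤ M)
    (hsign : ∀ y > a, V y ≠ c → 0 < (V y - c) * deriv (deriv V) y) :
    EqOn V (fun _ => c) (Ici a) := by
  obtain ⟨M, hM⟩ := hM
  have hsign' : ∀ y > a, 0 ≤ (V y - c) * deriv (deriv V) y := fun y hy => by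
    by_cases h : V y = c
    · simp [h]
    · exact (hsign y hy h).le
  have hflux : EqOn (flux V a c) 0 (Ioi a) := fun y hy =>
    le_antisymm (flux_nonpos_of_bounded hV hsign' hM hy)
      (by simpa [flux, hneu] using monotoneOn_flux hV hsign' self_mem_Ici (mem_Ici.2 hy.le) hy.le)
  have hinterior : EqOn V (fun _ => c) (Ioi a) := by
    intro y hy
    by_contra hne
    have hzero : HasDerivAt (flux V a c) 0 y :=
      (hasDerivAt_const y (0 : ℝ)).congr_of_eventuallyEq
        (eventually_of_mem (Ioi_mem_nhds hy) hflux)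
    have := (hasDerivAt_flux hV hy).unique hzero
    nlinarith [hsign y hy hne, sq_nonneg (derivWithin V (Ici a) y)]
  exact hinterior.of_subset_closure hV.continuousOn continuousOn_const Ioi_subset_Ici_self
    (closure_Ioi a).ge

end Flux

theorem stmt_11_general (d : ℝ) (hd : 0 < d) (f : ℝ → ℝ)
    (hfpos : ∀ s ∈ Set.Ioo (0:ℝ) 1, 0 < f s ∧ f s ≤ deriv f 0 * s)
    (hfneg : ∀ s : ℝ, 1 < s → f s < 0)
    (V : ℝ → ℝ) (hV : ContDiffOn ℝ 2 V (Set.Ici 0))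
    (hbdd : ∃ M : ℝ, ∀ y ≥ (0:ℝ), |V y| ≤ M)
    (hode : ∀ y > (0:ℝ), -d * deriv (deriv V) y = f (V y))
    (hneu : derivWithin V (Set.Ici 0) 0 = 0)
    (hinf : ∃ m > (0:ℝ), ∀ y ≥ (0:ℝ), m ≤ V y) :
    ∀ y ≥ (0:ℝ), V y = 1 := by
  obtain ⟨m, hm, hmV⟩ := hinf
  refine eqOn_const_of_neumann_of_bounded hV hneu hbdd fun y hy hne => ?_
  have hode_y := hode y hy
  rcases hne.lt_or_gt with hlt | hgt
  · have hf := (hfpos (V y) ⟨hm.trans_le (hmV y hy.le), hlt⟩).1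
    have : deriv (deriv V) y < 0 := by nlinarith
    nlinarith
  · have hf := hfneg (V y) hgt
    have : 0 < deriv (deriv V) y := by nlinarith
    nlinarith

theorem stmt_11 (d : ℝ) (hd : 0 < d) (f : ℝ → ℝ) (hf : ContDiff ℝ 1 f)
    (hf0 : f 0 = 0) (hf1 : f 1 = 0)
    (hfpos : ∀ s ∈ Set.Ioo (0:ℝ) 1, 0 < f s ∧ f s ≤ deriv f 0 * s)
    (hfneg : ∀ s : ℝ, 1 < s → f s < 0)
    (V : ℝ → ℝ) (hV : ContDiffOn ℝ 2 V (Set.Ici 0))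
    (hbdd : ∃ M : ℝ, ∀ y ≥ (0:ℝ), |V y| ≤ M)
    (hode : ∀ y > (0:ℝ), -d * deriv (deriv V) y = f (V y))
    (hneu : derivWithin V (Set.Ici 0) 0 = 0)
    (hinf : ∃ m > (0:ℝ), ∀ y ≥ (0:ℝ), m ≤ V y) :
    ∀ y ≥ (0:ℝ), V y = 1 :=
  stmt_11_general d hd f hfpos hfneg V hV hbdd hode hneu hinf
end

section
/- Let μ, d, f₀ > 0 (with f₀ standing for f'(0)). Consider the limiting system in unknowns (α, β, c): α² − cα = dβμ/(1+dβ) and α = (f₀ + dβ²)/c, for β > −1/d, α, c > 0. Then there exists a unique c_* > 0 such that the system has exactly one solution (α, β) when c = c_*, no solution with the curves tangent for c < c_* where the parabola lies strictly above the other curve, and at least two solutions for c > c_*. -/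
/-!
Substituting `α = F β / c` with `F β = f₀ + dβ²` turns the first equation into `H β = c² K β`,
where `H = F² (1 + dβ)` and `K = F (1 + dβ) + dβμ`, so the admissible speeds are those with
`c² = H β / K β` for some `β > -1/d`. On `β ≥ 0` the ratio `H / K` has derivative
`d F Φ / K²` with `Φ` strictly increasing and changing sign once, so it has a strict global
minimum `m < f₀` there; for `-1/d < β < 0` one has `H > f₀ K`, so solutions there need `c² > f₀`.
Hence `c_* = √m`. For `c > c_*`, `H - c² K` is positive at `β = -1/d` (where `H = 0`,
`K = -μ`), negative at the minimiser and nonnegative for large `β`, which gives two roots.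
-/

open Set

theorem existsUnique_threshold {ι : Type*} {P : ℝ → ι → Prop} {c₀ : ℝ} (h₀ : 0 < c₀)
    (hat : ∃! p, P c₀ p) (hbelow : ∀ c, 0 < c → c < c₀ → ¬ ∃ p, P c p)
    (habove : ∀ c, c₀ < c → ∃ p q, p ≠ q ∧ P c p ∧ P c q) :
    ∃! c₀ : ℝ, 0 < c₀ ∧ (∃! p, P c₀ p) ∧ (∀ c, 0 < c → c < c₀ → ¬ ∃ p, P c p) ∧
      (∀ c, c₀ < c → ∃ p q, p ≠ q ∧ P c p ∧ P c q) := by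
  refine ⟨c₀, ⟨h₀, hat, hbelow, habove⟩, fun c ⟨hc, hcat, _⟩ => ?_⟩
  obtain ⟨p, hp, huniq⟩ := hcat
  rcases lt_trichotomy c c₀ with hlt | heq | hgt
  · exact absurd ⟨p, hp⟩ (hbelow c hc hlt)
  · exact heq
  · obtain ⟨q, r, hqr, hq, hr⟩ := habove c hgt
    exact absurd ((huniq q hq).trans (huniq r hr).symm) hqr

theorem lt_apply_of_deriv_neg_of_deriv_pos {f : ℝ → ℝ} {a b : ℝ} (hab : a ≤ b)
    (hf : ContinuousOn f (Ici a)) (hneg : ∀ x ∈ Ioo a b, deriv f x < 0)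
    (hpos : ∀ x ∈ Ioi b, 0 < deriv f x) {x : ℝ} (hx : a ≤ x) (hxb : x ≠ b) : f b < f x := by
  rcases hxb.lt_or_gt with hlt | hgt
  · refine strictAntiOn_of_deriv_neg (convex_Icc a b) (hf.mono Icc_subset_Ici_self) ?_
      ⟨hx, hlt.le⟩ ⟨hab, le_rfl⟩ hlt
    simpa only [interior_Icc] using hneg
  · refine strictMonoOn_of_deriv_pos (convex_Ici b) (hf.mono (Ici_subset_Ici.2 hab)) ?_
      (mem_Ici.2 le_rfl) hgt.le hgt
    simpa only [interior_Ici] using hpos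

namespace RoadField

noncomputable section

def F (d f0 β : ℝ) : ℝ := f0 + d * β ^ 2

def H (d f0 β : ℝ) : ℝ := F d f0 β ^ 2 * (1 + d * β)

def K (d μ f0 β : ℝ) : ℝ := F d f0 β * (1 + d * β) + d * β * μ

def speedSq (d μ f0 β : ℝ) : ℝ := H d f0 β / K d μ f0 β

def Φ (d μ f0 β : ℝ) : ℝ :=
  2 * β * F d f0 β * (1 + d * β) ^ 2 + μ * (3 * d * β ^ 2 + 4 * d ^ 2 * β ^ 3) - μ * f0

-- `p = (α, β)`
def IsSol (d μ f0 c : ℝ) (p : ℝ × ℝ) : Prop :=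
  p.2 > -1/d ∧ p.1 > 0 ∧ p.1^2 - c*p.1 = d*p.2*μ/(1+d*p.2) ∧ p.1 = (f0 + d*p.2^2)/c

def ReducedSol (d μ f0 c β : ℝ) : Prop := 0 < 1 + d * β ∧ H d f0 β = c ^ 2 * K d μ f0 β

end

variable {d μ f0 c β : ℝ}

theorem one_add_mul_pos_iff (hd : 0 < d) : 0 < 1 + d * β ↔ -1 / d < β := by
  rw [div_lt_iff₀ hd]
  constructor <;> intro h <;> linarith

theorem F_pos (hd : 0 ≤ d) (hf0 : 0 < f0) (β : ℝ) : 0 < F d f0 β := by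
  unfold F; positivity

theorem H_pos (hd : 0 ≤ d) (hf0 : 0 < f0) (ht : 0 < 1 + d * β) : 0 < H d f0 β :=
  mul_pos (pow_pos (F_pos hd hf0 β) 2) ht

theorem K_pos (hd : 0 ≤ d) (hμ : 0 ≤ μ) (hf0 : 0 < f0) (hβ : 0 ≤ β) : 0 < K d μ f0 β := by
  have := F_pos hd hf0 β
  unfold K; positivity

theorem speedSq_pos (hd : 0 ≤ d) (hμ : 0 ≤ μ) (hf0 : 0 < f0) (hβ : 0 ≤ β) :
    0 < speedSq d μ f0 β :=
  div_pos (H_pos hd hf0 (by positivity)) (K_pos hd hμ hf0 hβ)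

theorem speedSq_zero (hf0 : f0 ≠ 0) : speedSq d μ f0 0 = f0 := by
  simp [speedSq, H, K, F, sq, hf0]

theorem H_neg_inv (hd : d ≠ 0) : H d f0 (-1 / d) = 0 := by
  simp only [H]; field_simp; ring

theorem K_neg_inv (hd : d ≠ 0) : K d μ f0 (-1 / d) = -μ := by
  simp only [K]; field_simp; ring

theorem continuous_H : Continuous (H d f0) := by
  unfold H F; fun_prop

theorem continuous_K : Continuous (K d μ f0) := by
  unfold K F; fun_prop

theorem hasDerivAt_speedSq (hK : K d μ f0 β ≠ 0) :
    HasDerivAt (speedSq d μ f0) (d * F d f0 β / K d μ f0 β ^ 2 * Φ d μ f0 β) β := by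
  have hF : HasDerivAt (F d f0) (d * (2 * β)) β := by
    unfold F
    simpa using ((hasDerivAt_pow 2 β).const_mul d).const_add f0
  have hL : HasDerivAt (fun x => 1 + d * x) d β := by
    simpa using ((hasDerivAt_id β).const_mul d).const_add 1
  have hH : HasDerivAt (H d f0) _ β := (hF.pow 2).mul hL
  have hM : HasDerivAt (fun x => d * x * μ) (d * μ) β := by
    simpa using ((hasDerivAt_id β).const_mul d).mul_const μ
  have hK' : HasDerivAt (K d μ f0) _ β := (hF.mul hL).add hM
  refine (hH.div hK' hK).congr_deriv ?_
  rw [div_mul_eq_mul_div]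
  congr 1
  simp only [H, K, F, Φ, Pi.pow_apply]
  push_cast
  ring

theorem Φ_strictMonoOn (hd : 0 < d) (hμ : 0 < μ) (hf0 : 0 ≤ f0) :
    StrictMonoOn (Φ d μ f0) (Ici 0) := by
  intro a (ha : 0 ≤ a) b (hb : 0 ≤ b) hab
  have hfirst : 2 * a * F d f0 a * (1 + d * a) ^ 2 ≤ 2 * b * F d f0 b * (1 + d * b) ^ 2 := by
    unfold F; gcongr
  have hsecond : 3 * d * a ^ 2 + 4 * d ^ 2 * a ^ 3 < 3 * d * b ^ 2 + 4 * d ^ 2 * b ^ 3 := by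
    gcongr
  unfold Φ
  nlinarith [mul_lt_mul_of_pos_left hsecond hμ]

theorem Φ_zero : Φ d μ f0 0 = -(μ * f0) := by
  simp [Φ]

theorem Φ_μ_pos (hd : 0 ≤ d) (hμ : 0 < μ) (hf0 : 0 < f0) : 0 < Φ d μ f0 μ := by
  have hF : f0 ≤ F d f0 μ := le_add_of_nonneg_right (by positivity)
  have h1 : 1 ≤ (1 + d * μ) ^ 2 := one_le_pow₀ (by linarith [mul_nonneg hd hμ.le])
  unfold Φ
  nlinarith [mul_le_mul hF h1 zero_le_one (hf0.le.trans hF), mul_pos hμ hf0,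
    mul_nonneg hμ.le (by positivity : 0 ≤ 3 * d * μ ^ 2 + 4 * d ^ 2 * μ ^ 3)]

theorem exists_Φ_eq_zero (hd : 0 < d) (hμ : 0 < μ) (hf0 : 0 < f0) :
    ∃ b ∈ Ioo 0 μ, Φ d μ f0 b = 0 := by
  have hcont : Continuous (Φ d μ f0) := by unfold Φ F; fun_prop
  refine intermediate_value_Ioo hμ.le hcont.continuousOn ⟨?_, Φ_μ_pos hd.le hμ hf0⟩
  rw [Φ_zero]
  exact neg_neg_of_pos (mul_pos hμ hf0)

theorem exists_speedSq_isStrictMin (hd : 0 < d) (hμ : 0 < μ) (hf0 : 0 < f0) :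
    ∃ b, 0 < b ∧ speedSq d μ f0 b < f0 ∧
      ∀ β, 0 ≤ β → β ≠ b → speedSq d μ f0 b < speedSq d μ f0 β := by
  obtain ⟨b, ⟨hb, -⟩, hΦb⟩ := exists_Φ_eq_zero hd hμ hf0
  have hK : ∀ x ∈ Ici (0 : ℝ), K d μ f0 x ≠ 0 := fun x hx => (K_pos hd.le hμ.le hf0 hx).ne'
  have hderiv : ∀ x ∈ Ici (0 : ℝ), deriv (speedSq d μ f0) x
      = d * F d f0 x / K d μ f0 x ^ 2 * Φ d μ f0 x := fun x hx =>
    (hasDerivAt_speedSq (hK x hx)).deriv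
  have hfactor : ∀ x ∈ Ici (0 : ℝ), 0 < d * F d f0 x / K d μ f0 x ^ 2 := fun x hx =>
    div_pos (mul_pos hd (F_pos hd.le hf0 x)) (pow_pos (K_pos hd.le hμ.le hf0 hx) 2)
  have hmin : ∀ β, 0 ≤ β → β ≠ b → speedSq d μ f0 b < speedSq d μ f0 β := by
    refine fun β hβ hne => lt_apply_of_deriv_neg_of_deriv_pos hb.le ?_ ?_ ?_ hβ hne
    · exact continuous_H.continuousOn.div continuous_K.continuousOn hK
    · intro x ⟨hx, hxb⟩
      rw [hderiv x hx.le]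
      refine mul_neg_of_pos_of_neg (hfactor x hx.le) ?_
      simpa [hΦb] using Φ_strictMonoOn hd hμ hf0.le hx.le hb.le hxb
    · intro x (hbx : b < x)
      rw [hderiv x (hb.le.trans hbx.le)]
      refine mul_pos (hfactor x (hb.le.trans hbx.le)) ?_
      simpa [hΦb] using Φ_strictMonoOn hd hμ hf0.le hb.le (hb.le.trans hbx.le) hbx
  refine ⟨b, hb, ?_, hmin⟩
  simpa [speedSq_zero hf0.ne'] using hmin 0 le_rfl hb.ne

theorem f0_mul_K_lt_H (hd : 0 < d) (hμ : 0 < μ) (hf0 : 0 < f0) (hβ : β < 0)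
    (ht : 0 < 1 + d * β) : f0 * K d μ f0 β < H d f0 β := by
  have hF := F_pos hd.le hf0 β
  have key : H d f0 β - f0 * K d μ f0 β
      = F d f0 β * (1 + d * β) * (d * β ^ 2) - f0 * μ * (d * β) := by
    simp only [H, K, F]; ring
  nlinarith [mul_neg_of_pos_of_neg (mul_pos hf0 hμ) (mul_neg_of_pos_of_neg hd hβ),
    mul_nonneg (mul_pos hF ht).le (mul_nonneg hd.le (sq_nonneg β))]

theorem sub_mul_K_le_H (hd : 0 ≤ d) (hμ : 0 ≤ μ) (hf0 : 0 < f0) (hβ : 0 ≤ β) :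
    (F d f0 β - μ) * K d μ f0 β ≤ H d f0 β := by
  have key : H d f0 β - (F d f0 β - μ) * K d μ f0 β = μ * F d f0 β + μ ^ 2 * (d * β) := by
    simp only [H, K]; ring
  nlinarith [mul_nonneg hμ (F_pos hd hf0 β).le, mul_nonneg (sq_nonneg μ) (mul_nonneg hd hβ)]

namespace ReducedSol

theorem K_pos (hd : 0 ≤ d) (hf0 : 0 < f0) (h : ReducedSol d μ f0 c β) : 0 < K d μ f0 β :=
  pos_of_mul_pos_right (h.2 ▸ H_pos hd hf0 h.1) (sq_nonneg c)

theorem f0_lt_sq (hd : 0 < d) (hμ : 0 < μ) (hf0 : 0 < f0) (h : ReducedSol d μ f0 c β)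
    (hβ : β < 0) : f0 < c ^ 2 :=
  lt_of_mul_lt_mul_right (h.2 ▸ f0_mul_K_lt_H hd hμ hf0 hβ h.1) (h.K_pos hd.le hf0).le

theorem speedSq_eq (hd : 0 ≤ d) (hf0 : 0 < f0) (h : ReducedSol d μ f0 c β) :
    speedSq d μ f0 β = c ^ 2 :=
  (div_eq_iff (h.K_pos hd hf0).ne').2 h.2

theorem eq_or_lt (hd : 0 < d) (hμ : 0 < μ) (hf0 : 0 < f0) {b : ℝ}
    (hbf0 : speedSq d μ f0 b < f0)
    (hmin : ∀ β, 0 ≤ β → β ≠ b → speedSq d μ f0 b < speedSq d μ f0 β)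
    (h : ReducedSol d μ f0 c β) :
    (β = b ∧ c ^ 2 = speedSq d μ f0 b) ∨ speedSq d μ f0 b < c ^ 2 := by
  rcases lt_or_ge β 0 with hβ | hβ
  · exact .inr (hbf0.trans (h.f0_lt_sq hd hμ hf0 hβ))
  · rw [← h.speedSq_eq hd.le hf0]
    by_cases hβb : β = b
    · exact .inl ⟨hβb, by rw [hβb]⟩
    · exact .inr (hmin β hβ hβb)

end ReducedSol

theorem exists_reducedSol_lt_lt (hd : 0 < d) (hμ : 0 < μ) (hf0 : 0 < f0) {b : ℝ} (hb : 0 ≤ b)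
    (hc : 0 < c) (hlt : speedSq d μ f0 b < c ^ 2) :
    ∃ β₁ β₂, β₁ < b ∧ b < β₂ ∧ ReducedSol d μ f0 c β₁ ∧ ReducedSol d μ f0 c β₂ := by
  set g : ℝ → ℝ := fun β => H d f0 β - c ^ 2 * K d μ f0 β
  have hg : Continuous g := continuous_H.sub (continuous_const.mul continuous_K)
  have hroot : ∀ β, -1 / d < β → g β = 0 → ReducedSol d μ f0 c β := fun β hβ hgβ =>
    ⟨(one_add_mul_pos_iff hd).2 hβ, sub_eq_zero.1 hgβ⟩
  have hleft : 0 < g (-1 / d) := by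
    simp only [g, H_neg_inv hd.ne', K_neg_inv hd.ne']
    nlinarith [mul_pos (pow_pos hc 2) hμ]
  have hmid : g b < 0 :=
    sub_neg.2 ((div_lt_iff₀ (K_pos hd.le hμ.le hf0 hb)).1 hlt)
  -- `H ≥ (F - μ) K ≥ c² K` as soon as `d B² ≥ c² + μ`
  set B := b + 1 + (c ^ 2 + μ) / d with hB
  have hq : 0 < (c ^ 2 + μ) / d := by positivity
  have hbB : b < B := by linarith
  have hright : 0 ≤ g B := by
    have hdB : c ^ 2 + μ ≤ B * d := (div_le_iff₀ hd).1 (by linarith)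
    have hBB : B ≤ B ^ 2 := by nlinarith
    have hcF : c ^ 2 ≤ F d f0 B - μ := by
      unfold F; nlinarith [mul_le_mul_of_nonneg_left hBB hd.le]
    have := mul_le_mul_of_nonneg_right hcF (K_pos hd.le hμ.le hf0 (hb.trans hbB.le)).le
    linarith [sub_mul_K_le_H hd.le hμ.le hf0 (hb.trans hbB.le)]
  have hneg : -1 / d < b := (div_neg_of_neg_of_pos (by norm_num) hd).trans_le hb
  obtain ⟨β₁, ⟨hβ₁, hβ₁b⟩, hgβ₁⟩ :=
    intermediate_value_Ioo' hneg.le hg.continuousOn ⟨hmid, hleft⟩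
  obtain ⟨β₂, ⟨hbβ₂, -⟩, hgβ₂⟩ :=
    intermediate_value_Ioc hbB.le hg.continuousOn ⟨hmid, hright⟩
  exact ⟨β₁, β₂, hβ₁b, hbβ₂, hroot β₁ hβ₁ hgβ₁, hroot β₂ (hneg.trans hbβ₂) hgβ₂⟩

theorem H_sub_mul_K {α : ℝ} (hc : c ≠ 0) (ht : 1 + d * β ≠ 0) (hα : α = F d f0 β / c) :
    H d f0 β - c ^ 2 * K d μ f0 β
      = c ^ 2 * (1 + d * β) * (α ^ 2 - c * α - d * β * μ / (1 + d * β)) := by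
  subst hα
  simp only [H, K]
  field_simp
  ring

theorem isSol_iff (hd : 0 < d) (hf0 : 0 < f0) (hc : 0 < c) {p : ℝ × ℝ} :
    IsSol d μ f0 c p ↔ ReducedSol d μ f0 c p.2 ∧ p.1 = F d f0 p.2 / c := by
  obtain ⟨α, β⟩ := p
  constructor
  · rintro ⟨hβ, -, heq, hα⟩
    have ht := (one_add_mul_pos_iff hd).2 hβ
    refine ⟨⟨ht, ?_⟩, hα⟩
    rw [← sub_eq_zero, H_sub_mul_K hc.ne' ht.ne' hα, sub_eq_zero.2 heq, mul_zero]
  · rintro ⟨⟨ht, hHK⟩, hα⟩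
    have hsub := H_sub_mul_K (μ := μ) hc.ne' ht.ne' hα
    rw [sub_eq_zero.2 hHK, eq_comm, mul_eq_zero] at hsub
    refine ⟨(one_add_mul_pos_iff hd).1 ht, hα ▸ div_pos (F_pos hd.le hf0 β) hc,
      sub_eq_zero.1 (hsub.resolve_left (by positivity)), hα⟩

end RoadField

open RoadField in
theorem stmt_13 (d μ f0 : ℝ) (hd : 0 < d) (hμ : 0 < μ) (hf0 : 0 < f0) :
    let P : ℝ → ℝ × ℝ → Prop := fun c p =>
      p.2 > -1/d ∧ p.1 > 0 ∧
      p.1^2 - c*p.1 = d*p.2*μ/(1+d*p.2) ∧ p.1 = (f0 + d*p.2^2)/c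
    ∃! cstar : ℝ, 0 < cstar ∧
      (∃! p : ℝ × ℝ, P cstar p) ∧
      (∀ c : ℝ, 0 < c → c < cstar → ¬ ∃ p : ℝ × ℝ, P c p) ∧
      (∀ c : ℝ, cstar < c → ∃ p q : ℝ × ℝ, p ≠ q ∧ P c p ∧ P c q) := by
  intro P
  obtain ⟨b, hb, hbf0, hmin⟩ := exists_speedSq_isStrictMin hd hμ hf0
  set m := speedSq d μ f0 b
  have hm : 0 < m := speedSq_pos hd.le hμ.le hf0 hb.le
  have hs : 0 < √m := Real.sqrt_pos.2 hm
  have hsq : √m ^ 2 = m := Real.sq_sqrt hm.le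
  refine existsUnique_threshold (P := IsSol d μ f0) hs ?_ ?_ ?_
  · have hbsol : ReducedSol d μ f0 (√m) b :=
      ⟨by positivity, by rw [hsq]; exact (div_eq_iff (K_pos hd.le hμ.le hf0 hb.le).ne').1 rfl⟩
    refine ⟨(F d f0 b / √m, b), (isSol_iff hd hf0 hs).2 ⟨hbsol, rfl⟩, fun p hp => ?_⟩
    obtain ⟨hpsol, hp1⟩ := (isSol_iff hd hf0 hs).1 hp
    obtain ⟨hpb, -⟩ | hlt := hpsol.eq_or_lt hd hμ hf0 hbf0 hmin
    · exact Prod.ext (by rw [hp1, hpb]) hpb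
    · exact absurd hsq hlt.ne'
  · rintro c hc hcs ⟨p, hp⟩
    have hcm : c ^ 2 < m := (Real.lt_sqrt hc.le).1 hcs
    obtain ⟨-, h⟩ | h := ((isSol_iff hd hf0 hc).1 hp).1.eq_or_lt hd hμ hf0 hbf0 hmin <;>
      linarith
  · intro c hsc
    have hc := hs.trans hsc
    obtain ⟨β₁, β₂, h₁, h₂, hsol₁, hsol₂⟩ :=
      exists_reducedSol_lt_lt hd hμ hf0 hb.le hc ((Real.sqrt_lt' hc).1 hsc)
    exact ⟨(F d f0 β₁ / c, β₁), (F d f0 β₂ / c, β₂),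
      fun h => (h₁.trans h₂).ne (congrArg Prod.snd h),
      (isSol_iff hd hf0 hc).2 ⟨hsol₁, rfl⟩, (isSol_iff hd hf0 hc).2 ⟨hsol₂, rfl⟩⟩
end
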